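/- For all integers n ≥ 0 and all natural numbers m, d with m ≤ d, the number of pairs (c, E), where c : Fin n → Bool is a choice with exactly d indices k satisfying c k = false and E is a noncrossing contraction with exactly m edges of the word of (a + a†)^n associated to c, equals the number of 2-Motzkin paths of length n with exactly m up steps U and exactly d − m gray level steps L'. -/

import Mathlib

/-- Two edges `(i,j)` and `(p,q)` cross if `i < p < j < q` or `p < i < q < j`. -/
def Crosses {N : ℕ} (e f : Fin N × Fin N) : Prop :=
  (e.1 < f.1 ∧ f.1 < e.2 ∧ e.2 < f.2) ∨ (f.1 < e.1 ∧ e.1 < f.2 ∧ f.2 < e.2)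

/-- A contraction of the word `w`: a set of edges `(i,j)` with `i < j`, `w i = false` (an `a`),
`w j = true` (an `a†`), whose endpoints are pairwise distinct. -/
def IsContraction {N : ℕ} (w : Fin N → Bool) (E : Finset (Fin N × Fin N)) : Prop :=
  (∀ e ∈ E, e.1 < e.2 ∧ w e.1 = false ∧ w e.2 = true) ∧
  (∀ e ∈ E, ∀ f ∈ E, e ≠ f → e.1 ≠ f.1 ∧ e.1 ≠ f.2 ∧ e.2 ≠ f.1 ∧ e.2 ≠ f.2)

/-- A set of edges is noncrossing if no two of its edges cross. -/
def IsNoncrossing {N : ℕ} (E : Finset (Fin N × Fin N)) : Prop :=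
  ∀ e ∈ E, ∀ f ∈ E, ¬ Crosses e f

/-- The number of noncrossing contractions of `w` with exactly `m` edges. -/
noncomputable def ncCount {N : ℕ} (w : Fin N → Bool) (m : ℕ) : ℕ :=
  Nat.card {E : Finset (Fin N × Fin N) //
    IsContraction w E ∧ IsNoncrossing E ∧ E.card = m}

/-- The number of pairs `(c, E)` where `c : Fin n → Bool` is a choice for `(a + a†)^n` (the
associated word has letter `a` at position `k` if `c k = false` and `a†` otherwise) with
exactly `i` indices `k` satisfying `c k = false`, and `E` is a noncrossing contraction of the
associated word with exactly `j` edges. -/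
noncomputable def pairCountAA (n j i : ℕ) : ℕ :=
  Nat.card {p : (Fin n → Bool) × Finset (Fin n × Fin n) //
    (Finset.univ.filter (fun k => p.1 k = false)).card = i ∧
    IsContraction p.1 p.2 ∧ IsNoncrossing p.2 ∧ p.2.card = j}

/-- Steps of a 2-Motzkin path: up, down, black level, gray level. -/
inductive MStep : Type
  | U : MStep
  | D : MStep
  | Lb : MStep
  | Lg : MStep
deriving DecidableEq

/-- Height change of a step: `U` is `+1`, `D` is `-1`, level steps are `0`. -/
def MStep.h : MStep → ℤ
  | .U => 1
  | .D => -1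
  | .Lb => 0
  | .Lg => 0

/-- A 2-Motzkin path: every partial height is nonnegative and the final height is `0`. -/
def IsMotzkin2 (p : List MStep) : Prop :=
  (∀ q : List MStep, q <+: p → 0 ≤ (q.map MStep.h).sum) ∧ (p.map MStep.h).sum = 0

/-!
Read a choice `c` with a noncrossing contraction `E` of its word from left to right: the left
endpoint of an edge is an up step, the right endpoint a down step, an uncontracted `a†` a black
and an uncontracted `a` a gray level step. The height after `t` steps is the number of edges
open at that moment, so this is a 2-Motzkin path. Because `E` is noncrossing, an edge `(i, j)`
is recovered from the path: `j + 1` is the first return after `i` to the height at `i`. The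
edges become the up steps and the uncontracted `a`'s the gray level steps.
-/

namespace MStep

lemma h_le_one (s : MStep) : s.h ≤ 1 := by cases s <;> simp [h]

lemma neg_one_le_h (s : MStep) : -1 ≤ s.h := by cases s <;> simp [h]

lemma h_pos_iff (s : MStep) : 0 < s.h ↔ s = .U := by cases s <;> simp [h]

lemma h_neg_iff (s : MStep) : s.h < 0 ↔ s = .D := by cases s <;> simp [h]

end MStep

namespace BosonMotzkin

open Finset

section Matching

variable {g : ℕ → ℤ} {i i' j j' : ℕ}

/-- `j + 1` is the first return of `g` to the level `g i` after `i`. -/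
def IsMatch (g : ℕ → ℤ) (i j : ℕ) : Prop :=
  i < j ∧ g (j + 1) = g i ∧ ∀ k, i < k → k ≤ j → g i < g k

namespace IsMatch

lemma lt_succ_left (h : IsMatch g i j) : g i < g (i + 1) :=
  h.2.2 _ (Nat.lt_succ_self i) h.1

lemma succ_right_lt (h : IsMatch g i j) : g (j + 1) < g j :=
  h.2.1 ▸ h.2.2 j h.1 le_rfl

lemma left_unique (h : IsMatch g i j) (h' : IsMatch g i j') : j = j' := by
  wlog hle : j ≤ j' generalizing j j'
  · exact (this h' h (by omega)).symm
  by_contra hne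
  have := h'.2.2 (j + 1) (by have := h.1; omega) (by omega)
  rw [h.2.1] at this
  exact lt_irrefl _ this

lemma right_unique (h : IsMatch g i j) (h' : IsMatch g i' j) : i = i' := by
  wlog hle : i ≤ i' generalizing i i'
  · exact (this h' h (by omega)).symm
  by_contra hne
  have := h.2.2 i' (by omega) h'.1.le
  rw [← h'.2.1, h.2.1] at this
  exact lt_irrefl _ this

lemma not_crossing (h : IsMatch g i j) (h' : IsMatch g i' j') (hi : i < i') (hi' : i' < j)
    (hj : j < j') : False := by
  have h₁ := h.2.2 i' hi hi'.le
  have h₂ := h'.2.2 (j + 1) (by omega) hj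
  rw [h.2.1] at h₂
  exact lt_asymm h₁ h₂

end IsMatch

lemma exists_isMatch_of_lt_succ (hg : ∀ t, g t ≤ g (t + 1) + 1) {N : ℕ} (hiN : i < N)
    (hN : g N ≤ g i) (hup : g i < g (i + 1)) : ∃ j, j < N ∧ IsMatch g i j := by
  -- `j + 1` is the least `t > i` with `g t ≤ g i`; as `g` falls by at most one, `g t = g i`.
  have hex : ∃ t, i < t ∧ g t ≤ g i := ⟨N, hiN, hN⟩
  set t := Nat.find hex
  obtain ⟨hit, hti⟩ : i < t ∧ g t ≤ g i := Nat.find_spec hex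
  have hbelow : ∀ k, i < k → k < t → g i < g k := fun k hik hkt =>
    not_le.mp fun hk => (Nat.find_min hex hkt) ⟨hik, hk⟩
  have hit' : i + 1 < t := by
    by_contra h
    rw [show t = i + 1 by omega] at hti
    exact absurd hti (not_le.mpr hup)
  refine ⟨t - 1, by have := Nat.find_min' hex ⟨hiN, hN⟩; omega, by omega, ?_,
    fun k hik hkt => hbelow k hik (by omega)⟩
  have hstep := hg (t - 1)
  have hprev := hbelow (t - 1) (by omega) (by omega)
  rw [Nat.sub_add_cancel (by omega : 1 ≤ t)] at hstep ⊢
  omega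

lemma exists_isMatch_of_succ_lt (hg : ∀ t, g (t + 1) ≤ g t + 1) {a : ℕ} (haj : a ≤ j)
    (ha : g a ≤ g (j + 1)) (hdown : g (j + 1) < g j) : ∃ i, IsMatch g i j := by
  -- `i` is the last `t ≤ j` with `g t ≤ g (j + 1)`; as `g` rises by at most one, equality holds.
  set t := Nat.findGreatest (fun s => g s ≤ g (j + 1)) j
  have ht : g t ≤ g (j + 1) := Nat.findGreatest_spec (P := fun s => g s ≤ g (j + 1)) haj ha
  have htj : t ≤ j := Nat.findGreatest_le j
  have habove : ∀ k, t < k → k ≤ j → g (j + 1) < g k := fun k htk hkj =>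
    not_le.mp (Nat.findGreatest_is_greatest htk hkj)
  have htj' : t < j := lt_of_le_of_ne htj fun h => by rw [h] at ht; omega
  have hnext := habove (t + 1) (by omega) htj'
  have hstep := hg t
  have hteq : g (j + 1) = g t := by omega
  exact ⟨t, htj', hteq, fun k htk hkj => hteq ▸ habove k htk hkj⟩

end Matching

section OfFn

variable {α : Type*} {n : ℕ}

lemma count_ofFn [DecidableEq α] (f : Fin n → α) (a : α) :
    (List.ofFn f).count a = #{k | f k = a} := by
  rw [← Multiset.coe_count, ← Fin.univ_val_map, Multiset.count_map]
  simp [Finset.card, Finset.filter_val, eq_comm]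

lemma card_subtype_ofFn (P : List α → Prop) :
    Nat.card {f : Fin n → α // P (List.ofFn f)}
      = Nat.card {l : List α // l.length = n ∧ P l} := by
  refine Nat.card_eq_of_bijective (fun f => ⟨List.ofFn f.1, List.length_ofFn, f.2⟩)
    ⟨fun f g h => Subtype.ext (List.ofFn_injective (congrArg Subtype.val h)), ?_⟩
  rintro ⟨l, rfl, hP⟩
  exact ⟨⟨fun i => l[(i : ℕ)], by rwa [List.ofFn_getElem]⟩, Subtype.ext List.ofFn_getElem⟩

lemma sum_ite_mem_image_eq_card [DecidableEq α] {E : Finset α} {φ : α → Fin n}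
    (hφ : Set.InjOn φ E) (t : ℕ) :
    ∑ k ∈ univ.filter (fun k : Fin n => (k : ℕ) < t),
        (if k ∈ E.image φ then (1 : ℤ) else 0) = #(E.filter fun e => (φ e : ℕ) < t) := by
  have : (univ.filter fun k : Fin n => (k : ℕ) < t).filter (· ∈ E.image φ)
      = (E.filter fun e => (φ e : ℕ) < t).image φ := by
    ext k
    simp only [mem_filter, mem_univ, true_and, mem_image]
    grind
  rw [sum_boole, this, card_image_of_injOn (hφ.mono (filter_subset _ _))]

end OfFn

section Height

variable {n : ℕ} (f : Fin n → MStep)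

def height (t : ℕ) : ℤ := ∑ k ∈ univ.filter (fun k : Fin n => (k : ℕ) < t), (f k).h

lemma height_zero : height f 0 = 0 := by simp [height]

lemma height_succ (k : Fin n) : height f (k + 1) = height f k + (f k).h := by
  have : univ.filter (fun l : Fin n => (l : ℕ) < k + 1)
      = insert k (univ.filter fun l : Fin n => (l : ℕ) < k) := by
    ext l
    simp only [mem_filter, mem_univ, true_and, mem_insert, Fin.ext_iff]
    omega
  rw [height, height, this, sum_insert (by simp), add_comm]

lemma height_succ_of_le {t : ℕ} (ht : n ≤ t) : height f (t + 1) = height f t := by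
  have hall : ∀ s, n ≤ s → univ.filter (fun l : Fin n => (l : ℕ) < s) = univ := fun s hs =>
    filter_true_of_mem fun l _ => by omega
  rw [height, height, hall t ht, hall (t + 1) (by omega)]

lemma height_succ_le (t : ℕ) : height f (t + 1) ≤ height f t + 1 := by
  by_cases ht : t < n
  · have hstep := height_succ f ⟨t, ht⟩
    dsimp only at hstep
    have := (f ⟨t, ht⟩).h_le_one
    omega
  · rw [height_succ_of_le f (not_lt.mp ht)]
    omega

lemma height_le_succ (t : ℕ) : height f t ≤ height f (t + 1) + 1 := by
  by_cases ht : t < n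
  · have hstep := height_succ f ⟨t, ht⟩
    dsimp only at hstep
    have := (f ⟨t, ht⟩).neg_one_le_h
    omega
  · rw [height_succ_of_le f (not_lt.mp ht)]
    omega

lemma eq_U_of_height_lt {k : Fin n} (h : height f k < height f (k + 1)) : f k = .U := by
  rw [height_succ] at h
  exact (f k).h_pos_iff.mp (by omega)

lemma eq_D_of_height_lt {k : Fin n} (h : height f (k + 1) < height f k) : f k = .D := by
  rw [height_succ] at h
  exact (f k).h_neg_iff.mp (by omega)

lemma sum_take_ofFn_h (t : ℕ) : (((List.ofFn f).take t).map MStep.h).sum = height f t := by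
  rw [List.map_take, List.map_ofFn, List.sum_take_ofFn]
  rfl

lemma sum_ofFn_h : ((List.ofFn f).map MStep.h).sum = height f n := by
  rw [← sum_take_ofFn_h f n, List.take_of_length_le (by simp)]

lemma isMotzkin2_ofFn_iff :
    IsMotzkin2 (List.ofFn f) ↔ (∀ t, 0 ≤ height f t) ∧ height f n = 0 := by
  have hprefix :
      (∀ q, q <+: List.ofFn f → 0 ≤ (q.map MStep.h).sum) ↔ ∀ t, 0 ≤ height f t :=
    ⟨fun h t => sum_take_ofFn_h f t ▸ h _ (List.take_prefix t _), fun h q hq => by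
      rw [List.prefix_iff_eq_take.mp hq, sum_take_ofFn_h]
      exact h _⟩
  rw [IsMotzkin2, hprefix, sum_ofFn_h]

end Height

section ContractionToPath

variable {n : ℕ} {c : Fin n → Bool} {E : Finset (Fin n × Fin n)} {e : Fin n × Fin n}

def pathOf (c : Fin n → Bool) (E : Finset (Fin n × Fin n)) (k : Fin n) : MStep :=
  if k ∈ E.image Prod.fst then .U
  else if k ∈ E.image Prod.snd then .D
  else if c k then .Lb else .Lg

def wordOf (f : Fin n → MStep) (k : Fin n) : Bool :=
  match f k with
  | .D | .Lb => true
  | .U | .Lg => false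

/-- The edges open after the first `t` letters. -/
def covering (E : Finset (Fin n × Fin n)) (t : ℕ) : Finset (Fin n × Fin n) :=
  E.filter fun e => (e.1 : ℕ) < t ∧ t ≤ e.2

namespace IsContraction

variable (hC : IsContraction c E)
include hC

lemma injOn_fst : Set.InjOn Prod.fst (E : Set (Fin n × Fin n)) := fun e he e' he' h =>
  by_contra fun hne => (hC.2 e he e' he' hne).1 h

lemma injOn_snd : Set.InjOn Prod.snd (E : Set (Fin n × Fin n)) := fun e he e' he' h =>
  by_contra fun hne => (hC.2 e he e' he' hne).2.2.2 h

lemma notMem_image_snd {k : Fin n} (hk : k ∈ E.image Prod.fst) : k ∉ E.image Prod.snd := by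
  intro hk'
  obtain ⟨e, he, rfl⟩ := mem_image.mp hk
  obtain ⟨e', he', hee'⟩ := mem_image.mp hk'
  by_cases hne : e' = e
  · subst hne
    exact (hC.1 e' he').1.ne' hee'
  · exact (hC.2 e' he' e he hne).2.2.1 hee'

lemma nested_or_disjoint (hN : IsNoncrossing E) {e e' : Fin n × Fin n} (he : e ∈ E)
    (he' : e' ∈ E) (h : e.1 < e'.1) : e'.2 < e.2 ∨ e.2 < e'.1 := by
  have hne : e ≠ e' := by rintro rfl; exact lt_irrefl _ h
  have := hC.2 e he e' he' hne
  have := (hC.1 e he).1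
  have := (hC.1 e' he').1
  have := hN e he e' he'
  simp only [Crosses, not_or, not_and] at this
  omega

end IsContraction

lemma pathOf_eq_U_iff {k : Fin n} : pathOf c E k = .U ↔ k ∈ E.image Prod.fst := by
  unfold pathOf
  split_ifs <;> simp_all

lemma pathOf_eq_D_iff (hC : IsContraction c E) {k : Fin n} :
    pathOf c E k = .D ↔ k ∈ E.image Prod.snd := by
  by_cases h1 : k ∈ E.image Prod.fst
  · rw [pathOf, if_pos h1]
    simpa using IsContraction.notMem_image_snd hC h1
  rw [pathOf, if_neg h1]
  split_ifs <;> simp_all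

lemma wordOf_pathOf (hC : IsContraction c E) : wordOf (pathOf c E) = c := by
  funext k
  by_cases h1 : k ∈ E.image Prod.fst
  · obtain ⟨e, he, rfl⟩ := mem_image.mp h1
    simp [wordOf, pathOf, h1, (hC.1 e he).2.1]
  by_cases h2 : k ∈ E.image Prod.snd
  · obtain ⟨e, he, rfl⟩ := mem_image.mp h2
    simp [wordOf, pathOf, h1, h2, (hC.1 e he).2.2]
  cases hk : c k <;> simp [wordOf, pathOf, h1, h2, hk]

lemma h_pathOf (hC : IsContraction c E) (k : Fin n) :
    (pathOf c E k).h = (if k ∈ E.image Prod.fst then 1 else 0)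
      - (if k ∈ E.image Prod.snd then 1 else 0) := by
  by_cases h1 : k ∈ E.image Prod.fst
  · rw [pathOf, if_pos h1, if_pos h1, if_neg (IsContraction.notMem_image_snd hC h1)]
    rfl
  by_cases h2 : k ∈ E.image Prod.snd
  · rw [pathOf, if_neg h1, if_pos h2, if_neg h1, if_pos h2]
    rfl
  rw [pathOf, if_neg h1, if_neg h2, if_neg h1, if_neg h2]
  cases c k <;> rfl

lemma height_pathOf (hC : IsContraction c E) (t : ℕ) :
    height (pathOf c E) t = #(covering E t) := by
  have hsub : E.filter (fun e => (e.2 : ℕ) < t) ⊆ E.filter (fun e => (e.1 : ℕ) < t) :=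
    monotone_filter_right _ fun e he h => Nat.lt_trans (hC.1 e he).1 h
  have hcov : covering E t
      = E.filter (fun e => (e.1 : ℕ) < t) \ E.filter (fun e => (e.2 : ℕ) < t) := by
    ext e
    simp only [covering, mem_filter, mem_sdiff]
    grind
  rw [height, sum_congr rfl fun k _ => h_pathOf hC k, sum_sub_distrib,
    sum_ite_mem_image_eq_card (IsContraction.injOn_fst hC),
    sum_ite_mem_image_eq_card (IsContraction.injOn_snd hC), hcov,
    card_sdiff_of_subset hsub, Nat.cast_sub (card_le_card hsub)]

lemma covering_last : covering E n = ∅ :=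
  filter_false_of_mem fun e _ h => by omega

section Noncrossing

variable (hC : IsContraction c E) (hN : IsNoncrossing E) (he : e ∈ E)
include hC hN he

lemma covering_subset_covering {k : ℕ} (hk₁ : e.1 ≤ k) (hk₂ : k ≤ e.2 + 1) :
    covering E e.1 ⊆ covering E k := by
  intro a ha
  simp only [covering, mem_filter] at ha ⊢
  obtain ⟨haE, h₁, h₂⟩ := ha
  refine ⟨haE, ?_, ?_⟩ <;>
  rcases IsContraction.nested_or_disjoint hC hN haE he h₁ with h | h <;> omega

lemma covering_ssubset_covering {k : ℕ} (hk₁ : e.1 < k) (hk₂ : k ≤ e.2) :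
    covering E e.1 ⊂ covering E k := by
  rw [ssubset_iff_of_subset (covering_subset_covering hC hN he hk₁.le (by omega))]
  exact ⟨e, mem_filter.mpr ⟨he, hk₁, hk₂⟩, fun h => by simp [covering] at h⟩

lemma covering_succ_snd : covering E (e.2 + 1) = covering E e.1 := by
  refine subset_antisymm (fun a ha => ?_)
    (covering_subset_covering hC hN he (by have := (hC.1 e he).1; omega) le_rfl)
  simp only [covering, mem_filter] at ha ⊢
  obtain ⟨haE, h₁, h₂⟩ := ha
  have hne : a ≠ e := by rintro rfl; omega
  have hdist := hC.2 a haE e he hne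
  have := (hC.1 e he).1
  have hlt : a.1 < e.1 := by
    rcases lt_trichotomy a.1 e.1 with h | h | h
    · exact h
    · exact absurd h hdist.1
    · rcases IsContraction.nested_or_disjoint hC hN he haE h with h' | h' <;> omega
  rcases IsContraction.nested_or_disjoint hC hN haE he hlt with h' | h'
  · exact ⟨haE, hlt, by omega⟩
  · omega

lemma isMatch_height_pathOf : IsMatch (height (pathOf c E)) e.1 e.2 := by
  refine ⟨(hC.1 e he).1, ?_, fun k hk₁ hk₂ => ?_⟩
  · rw [height_pathOf hC, height_pathOf hC, covering_succ_snd hC hN he]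
  · rw [height_pathOf hC, height_pathOf hC]
    exact_mod_cast card_lt_card (covering_ssubset_covering hC hN he hk₁ hk₂)

end Noncrossing

lemma card_pathOf_eq_U (hC : IsContraction c E) : #{k | pathOf c E k = .U} = #E := by
  have : univ.filter (fun k => pathOf c E k = .U) = E.image Prod.fst := by
    ext k
    simp [pathOf_eq_U_iff]
  rw [this, card_image_of_injOn (IsContraction.injOn_fst hC)]

lemma card_false_eq_card_add_card_Lg (hC : IsContraction c E) :
    #{k | c k = false} = #E + #{k | pathOf c E k = .Lg} := by
  have hfalse : ∀ k, c k = false ↔ pathOf c E k = .U ∨ pathOf c E k = .Lg := fun k => by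
    conv_lhs => rw [← wordOf_pathOf hC]
    unfold wordOf
    cases pathOf c E k <;> simp
  rw [← card_pathOf_eq_U hC, ← card_union_of_disjoint, ← filter_or]
  · exact congrArg card (filter_congr fun k _ => hfalse k)
  · exact disjoint_filter.mpr fun k _ h h' => by rw [h] at h'; cases h'

end ContractionToPath

section PathToContraction

variable {n : ℕ} {f : Fin n → MStep}

open Classical in
noncomputable def contractionOf (f : Fin n → MStep) : Finset (Fin n × Fin n) :=
  univ.filter fun e => IsMatch (height f) e.1 e.2

lemma mem_contractionOf {e : Fin n × Fin n} :
    e ∈ contractionOf f ↔ IsMatch (height f) e.1 e.2 := by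
  simp [contractionOf]

lemma eq_U_of_mem_contractionOf {e : Fin n × Fin n} (he : e ∈ contractionOf f) : f e.1 = .U :=
  eq_U_of_height_lt f (mem_contractionOf.mp he).lt_succ_left

lemma eq_D_of_mem_contractionOf {e : Fin n × Fin n} (he : e ∈ contractionOf f) : f e.2 = .D :=
  eq_D_of_height_lt f (mem_contractionOf.mp he).succ_right_lt

lemma isContraction_contractionOf (f : Fin n → MStep) :
    IsContraction (wordOf f) (contractionOf f) := by
  refine ⟨fun e he => ⟨(mem_contractionOf.mp he).1, ?_, ?_⟩, fun e he e' he' hne => ?_⟩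
  · simp [wordOf, eq_U_of_mem_contractionOf he]
  · simp [wordOf, eq_D_of_mem_contractionOf he]
  have hm := mem_contractionOf.mp he
  have hm' := mem_contractionOf.mp he'
  have hUD : ∀ {a b}, a ∈ contractionOf f → b ∈ contractionOf f → a.1 ≠ b.2 :=
    fun ha hb h => by
      have := eq_D_of_mem_contractionOf hb
      rw [← h, eq_U_of_mem_contractionOf ha] at this
      cases this
  refine ⟨fun h => hne (Prod.ext h (Fin.ext ?_)), hUD he he', (hUD he' he).symm,
    fun h => hne (Prod.ext (Fin.ext ?_) h)⟩
  · rw [h] at hm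
    exact hm.left_unique hm'
  · rw [h] at hm
    exact hm.right_unique hm'

lemma isNoncrossing_contractionOf (f : Fin n → MStep) : IsNoncrossing (contractionOf f) := by
  intro e he e' he' hcross
  have hm := mem_contractionOf.mp he
  have hm' := mem_contractionOf.mp he'
  rcases hcross with ⟨h₁, h₂, h₃⟩ | ⟨h₁, h₂, h₃⟩
  · exact hm.not_crossing hm' h₁ h₂ h₃
  · exact hm'.not_crossing hm h₁ h₂ h₃

variable (hnonneg : ∀ t, 0 ≤ height f t)
include hnonneg

lemma mem_image_fst_contractionOf_iff (hend : height f n = 0) {k : Fin n} :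
    k ∈ (contractionOf f).image Prod.fst ↔ f k = .U := by
  refine ⟨fun hk => ?_, fun hk => ?_⟩
  · obtain ⟨e, he, rfl⟩ := mem_image.mp hk
    exact eq_U_of_mem_contractionOf he
  have hup : height f k < height f (k + 1) := by
    rw [height_succ, hk]
    simp [MStep.h]
  obtain ⟨j, hj, hm⟩ :=
    exists_isMatch_of_lt_succ (height_le_succ f) k.isLt (hend ▸ hnonneg k) hup
  exact mem_image.mpr ⟨(k, ⟨j, hj⟩), mem_contractionOf.mpr hm, rfl⟩

lemma mem_image_snd_contractionOf_iff {k : Fin n} :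
    k ∈ (contractionOf f).image Prod.snd ↔ f k = .D := by
  refine ⟨fun hk => ?_, fun hk => ?_⟩
  · obtain ⟨e, he, rfl⟩ := mem_image.mp hk
    exact eq_D_of_mem_contractionOf he
  have hdown : height f (k + 1) < height f k := by
    rw [height_succ, hk]
    simp [MStep.h]
  obtain ⟨i, hm⟩ := exists_isMatch_of_succ_lt (height_succ_le f) (Nat.zero_le k)
    (height_zero f ▸ hnonneg _) hdown
  exact mem_image.mpr ⟨(⟨i, hm.1.trans k.isLt⟩, k), mem_contractionOf.mpr hm, rfl⟩

lemma pathOf_wordOf_contractionOf (hend : height f n = 0) :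
    pathOf (wordOf f) (contractionOf f) = f := by
  funext k
  simp only [pathOf, mem_image_fst_contractionOf_iff hnonneg hend,
    mem_image_snd_contractionOf_iff hnonneg]
  cases hk : f k <;> simp [wordOf, hk]

end PathToContraction

lemma contractionOf_pathOf {n : ℕ} {c : Fin n → Bool} {E : Finset (Fin n × Fin n)}
    (hC : IsContraction c E) (hN : IsNoncrossing E) : contractionOf (pathOf c E) = E := by
  have hsub : E ⊆ contractionOf (pathOf c E) := fun e he =>
    mem_contractionOf.mpr (isMatch_height_pathOf hC hN he)
  refine subset_antisymm (fun e he => ?_) hsub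
  obtain ⟨a, ha, hae⟩ :=
    mem_image.mp ((pathOf_eq_D_iff hC).mp (eq_D_of_mem_contractionOf he))
  have hm := mem_contractionOf.mp he
  rw [← hae] at hm
  have : e = a :=
    Prod.ext (Fin.ext ((isMatch_height_pathOf hC hN ha).right_unique hm).symm) hae.symm
  rwa [this]

def NoncrossingContraction (n : ℕ) : Type :=
  {p : (Fin n → Bool) × Finset (Fin n × Fin n) // IsContraction p.1 p.2 ∧ IsNoncrossing p.2}

def MotzkinTuple (n : ℕ) : Type := {f : Fin n → MStep // IsMotzkin2 (List.ofFn f)}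

noncomputable def noncrossingContractionEquiv (n : ℕ) :
    NoncrossingContraction n ≃ MotzkinTuple n where
  toFun p := ⟨pathOf p.1.1 p.1.2, (isMotzkin2_ofFn_iff _).mpr
    ⟨fun t => height_pathOf p.2.1 t ▸ Nat.cast_nonneg _,
      by rw [height_pathOf p.2.1, covering_last, card_empty, Nat.cast_zero]⟩⟩
  invFun f := ⟨(wordOf f.1, contractionOf f.1),
    isContraction_contractionOf f.1, isNoncrossing_contractionOf f.1⟩
  left_inv p := Subtype.ext <| Prod.ext (wordOf_pathOf p.2.1) (contractionOf_pathOf p.2.1 p.2.2)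
  right_inv f :=
    have hf := (isMotzkin2_ofFn_iff f.1).mp f.2
    Subtype.ext (pathOf_wordOf_contractionOf hf.1 hf.2)

lemma card_false_eq_and_card_eq_iff_count_pathOf {n m d : ℕ} (hmd : m ≤ d) {c : Fin n → Bool}
    {E : Finset (Fin n × Fin n)} (hC : IsContraction c E) :
    (#{k | c k = false} = d ∧ #E = m) ↔
      ((List.ofFn (pathOf c E)).count .U = m ∧ (List.ofFn (pathOf c E)).count .Lg = d - m) := by
  rw [count_ofFn, count_ofFn, card_pathOf_eq_U hC, card_false_eq_card_add_card_Lg hC]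
  omega

lemma pairCountAA_eq_card (n m d : ℕ) : pairCountAA n m d
    = Nat.card {p : NoncrossingContraction n // #{k | p.1.1 k = false} = d ∧ #p.1.2 = m} :=
  Nat.card_congr <| (Equiv.subtypeEquivRight fun _ => by tauto).trans
    (Equiv.subtypeSubtypeEquivSubtypeInter
      (fun p : (Fin n → Bool) × Finset (Fin n × Fin n) =>
        IsContraction p.1 p.2 ∧ IsNoncrossing p.2)
      fun p => #{k | p.1 k = false} = d ∧ #p.2 = m).symm

end BosonMotzkin

theorem stmt16 (n m d : ℕ) (hmd : m ≤ d) :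
    pairCountAA n m d
      = Nat.card {p : List MStep // p.length = n ∧ IsMotzkin2 p ∧
          p.count MStep.U = m ∧ p.count MStep.Lg = d - m} := by
  open Finset BosonMotzkin in
  calc pairCountAA n m d
      = Nat.card {p : NoncrossingContraction n // #{k | p.1.1 k = false} = d ∧ #p.1.2 = m} :=
        pairCountAA_eq_card n m d
    _ = Nat.card {f : MotzkinTuple n //
          (List.ofFn f.1).count .U = m ∧ (List.ofFn f.1).count .Lg = d - m} :=
        Nat.card_congr <| (noncrossingContractionEquiv n).subtypeEquiv fun p =>
          card_false_eq_and_card_eq_iff_count_pathOf hmd p.2.1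
    _ = _ := (Nat.card_congr (Equiv.subtypeSubtypeEquivSubtypeInter _ _)).trans
          (card_subtype_ofFn fun l => IsMotzkin2 l ∧ l.count .U = m ∧ l.count .Lg = d - m)
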